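/- Let H be a separable complex Hilbert space and let {W_i}_{i∈I} and {V_i}_{i∈I} be fusion frames for H with weights {ν_i} and {μ_i} which are woven fusion frames with some universal bounds A, B > 0. Let B₁ = sup_{‖f‖=1} Σ_{i∈I} ν_i² ‖P_{W_i} f‖² and B₂ = sup_{‖f‖=1} Σ_{i∈I} μ_i² ‖P_{V_i} f‖² be the optimal upper fusion frame bounds of the two families. Then B₁ + B₂ is not the optimal universal upper woven bound; that is, sup over all subsets σ ⊆ I and all unit vectors f ∈ H of Σ_{i∈σ} ν_i² ‖P_{W_i} f‖² + Σ_{i∈σᶜ} μ_i² ‖P_{V_i} f‖² is strictly less than B₁ + B₂. -/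

import Mathlib

/-!
Fix a unit vector `f` and write `a i = ν i ^ 2 * ‖P_{W i} f‖ ^ 2`, `b i = μ i ^ 2 * ‖P_{V i} f‖ ^ 2`.
The weavings along `σ` and along `σᶜ` together use every term of both families exactly once, so
their sum is `∑ a + ∑ b ≤ B₁ + B₂`. The weaving along `σᶜ` is at least the universal lower bound
`A`, hence the weaving along `σ` is at most `B₁ + B₂ - A`, uniformly in `σ` and `f`.
The weavings along `Set.univ` and `∅` are the two families themselves, so the lower woven bound
also makes both families summable, which the `tsum` bookkeeping needs.
-/

open Set

lemma summable_of_tsum_ne_zero {α β : Type*} [AddCommMonoid α] [TopologicalSpace α] {f : β → α}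
    (h : ∑' i, f i ≠ 0) : Summable f :=
  not_not.mp (mt tsum_eq_zero_of_not_summable h)

section WovenSum

variable {I : Type*} (a b : I → ℝ)

noncomputable def wovenSum (σ : Set I) : ℝ := (∑' i : σ, a i) + ∑' i : ↥σᶜ, b i

@[simp]
lemma wovenSum_univ : wovenSum a b univ = ∑' i, a i := by
  simp [wovenSum]

@[simp]
lemma wovenSum_empty : wovenSum a b ∅ = ∑' i, b i := by
  rw [wovenSum, compl_empty, tsum_univ]
  simp

variable {a b}

lemma wovenSum_add_wovenSum_compl (ha : Summable a) (hb : Summable b) (σ : Set I) :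
    wovenSum a b σ + wovenSum a b σᶜ = ∑' i, a i + ∑' i, b i := by
  rw [wovenSum, wovenSum, compl_compl, ← ha.tsum_subtype_add_tsum_subtype_compl σ,
    ← hb.tsum_subtype_add_tsum_subtype_compl σ]
  ring

lemma wovenSum_le_tsum_add_tsum_sub {A : ℝ} (hA : 0 < A) (hlow : ∀ σ, A ≤ wovenSum a b σ)
    (σ : Set I) : wovenSum a b σ ≤ ∑' i, a i + ∑' i, b i - A := by
  have ha : Summable a := summable_of_tsum_ne_zero (by linarith [wovenSum_univ a b ▸ hlow univ])
  have hb : Summable b := summable_of_tsum_ne_zero (by linarith [wovenSum_empty a b ▸ hlow ∅])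
  linarith [wovenSum_add_wovenSum_compl ha hb σ, hlow σᶜ]

end WovenSum

theorem sum_of_optimal_upper_bounds_not_optimal_woven_bound_general
    {H : Type*} [NormedAddCommGroup H] [InnerProductSpace ℂ H]
    {I : Type*}
    (W V : I → Submodule ℂ H) [∀ i, CompleteSpace (W i)] [∀ i, CompleteSpace (V i)]
    (ν μ : I → ℝ)
    (B₁ B₂ : ℝ)
    (hB₁ : IsLUB {r : ℝ | ∃ f : H, ‖f‖ = 1 ∧
      r = ∑' i : I, ν i ^ 2 * ‖(Submodule.orthogonalProjection (W i) f : H)‖ ^ 2} B₁)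
    (hB₂ : IsLUB {r : ℝ | ∃ f : H, ‖f‖ = 1 ∧
      r = ∑' i : I, μ i ^ 2 * ‖(Submodule.orthogonalProjection (V i) f : H)‖ ^ 2} B₂)
    (A B : ℝ) (hA : 0 < A)
    (hwoven : ∀ σ : Set I, ∀ f : H,
      A * ‖f‖ ^ 2 ≤
        (∑' i : σ, ν (i : I) ^ 2 * ‖(Submodule.orthogonalProjection (W (i : I)) f : H)‖ ^ 2) +
          (∑' i : ↥σᶜ, μ (i : I) ^ 2 * ‖(Submodule.orthogonalProjection (V (i : I)) f : H)‖ ^ 2) ∧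
      (∑' i : σ, ν (i : I) ^ 2 * ‖(Submodule.orthogonalProjection (W (i : I)) f : H)‖ ^ 2) +
          (∑' i : ↥σᶜ, μ (i : I) ^ 2 * ‖(Submodule.orthogonalProjection (V (i : I)) f : H)‖ ^ 2) ≤
        B * ‖f‖ ^ 2) :
    sSup {r : ℝ | ∃ (σ : Set I) (f : H), ‖f‖ = 1 ∧
      r = (∑' i : σ, ν (i : I) ^ 2 * ‖(Submodule.orthogonalProjection (W (i : I)) f : H)‖ ^ 2) +
        (∑' i : ↥σᶜ, μ (i : I) ^ 2 * ‖(Submodule.orthogonalProjection (V (i : I)) f : H)‖ ^ 2)}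
      < B₁ + B₂ := by
  obtain ⟨-, f₀, hf₀, -⟩ := hB₁.nonempty
  refine lt_of_le_of_lt (b := B₁ + B₂ - A) (csSup_le ?_ ?_) (sub_lt_self _ hA)
  · exact ⟨_, ∅, f₀, hf₀, rfl⟩
  rintro _ ⟨σ, f, hf, rfl⟩
  refine (wovenSum_le_tsum_add_tsum_sub (a := fun i ↦ ν i ^ 2 * ‖(W i).starProjection f‖ ^ 2)
    (b := fun i ↦ μ i ^ 2 * ‖(V i).starProjection f‖ ^ 2) hA (fun τ ↦ ?_) σ).trans ?_
  · have hlow := (hwoven τ f).1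
    rw [hf, one_pow, mul_one] at hlow
    exact hlow
  · gcongr
    exacts [hB₁.1 ⟨f, hf, rfl⟩, hB₂.1 ⟨f, hf, rfl⟩]

/-- If two fusion frames with optimal upper bounds `B₁` and `B₂` are woven fusion frames,
then `B₁ + B₂` is not the optimal universal upper woven bound. -/
theorem sum_of_optimal_upper_bounds_not_optimal_woven_bound
    {H : Type*} [NormedAddCommGroup H] [InnerProductSpace ℂ H] [CompleteSpace H]
    [TopologicalSpace.SeparableSpace H]
    {I : Type*} [Countable I]
    (W V : I → Submodule ℂ H) [∀ i, CompleteSpace (W i)] [∀ i, CompleteSpace (V i)]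
    (ν μ : I → ℝ) (hν : ∀ i, 0 < ν i) (hμ : ∀ i, 0 < μ i)
    (CW CV : ℝ) (hCW : 0 < CW) (hCV : 0 < CV)
    (hWlow : ∀ f : H,
      CW * ‖f‖ ^ 2 ≤ ∑' i : I, ν i ^ 2 * ‖(Submodule.orthogonalProjection (W i) f : H)‖ ^ 2)
    (hVlow : ∀ f : H,
      CV * ‖f‖ ^ 2 ≤ ∑' i : I, μ i ^ 2 * ‖(Submodule.orthogonalProjection (V i) f : H)‖ ^ 2)
    (B₁ B₂ : ℝ)
    (hB₁ : IsLUB {r : ℝ | ∃ f : H, ‖f‖ = 1 ∧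
      r = ∑' i : I, ν i ^ 2 * ‖(Submodule.orthogonalProjection (W i) f : H)‖ ^ 2} B₁)
    (hB₂ : IsLUB {r : ℝ | ∃ f : H, ‖f‖ = 1 ∧
      r = ∑' i : I, μ i ^ 2 * ‖(Submodule.orthogonalProjection (V i) f : H)‖ ^ 2} B₂)
    (A B : ℝ) (hA : 0 < A) (hB : 0 < B)
    (hwoven : ∀ σ : Set I, ∀ f : H,
      A * ‖f‖ ^ 2 ≤
        (∑' i : σ, ν (i : I) ^ 2 * ‖(Submodule.orthogonalProjection (W (i : I)) f : H)‖ ^ 2) +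
          (∑' i : ↥σᶜ, μ (i : I) ^ 2 * ‖(Submodule.orthogonalProjection (V (i : I)) f : H)‖ ^ 2) ∧
      (∑' i : σ, ν (i : I) ^ 2 * ‖(Submodule.orthogonalProjection (W (i : I)) f : H)‖ ^ 2) +
          (∑' i : ↥σᶜ, μ (i : I) ^ 2 * ‖(Submodule.orthogonalProjection (V (i : I)) f : H)‖ ^ 2) ≤
        B * ‖f‖ ^ 2) :
    sSup {r : ℝ | ∃ (σ : Set I) (f : H), ‖f‖ = 1 ∧
      r = (∑' i : σ, ν (i : I) ^ 2 * ‖(Submodule.orthogonalProjection (W (i : I)) f : H)‖ ^ 2) +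
        (∑' i : ↥σᶜ, μ (i : I) ^ 2 * ‖(Submodule.orthogonalProjection (V (i : I)) f : H)‖ ^ 2)}
      < B₁ + B₂ :=
  sum_of_optimal_upper_bounds_not_optimal_woven_bound_general W V ν μ B₁ B₂ hB₁ hB₂ A B hA hwoven
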